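/- arXiv:2111.08586 — 2 statements merged into one kernel-verified Lean document; each statement's English description precedes it below -/
import Mathlib

section
/- Let D be odd and B ∈ S_D with |B| = (D−1)/2, E = 𝔼_B. Then η_D ∉ E and 𝔽η_D ⊕ E ∈ 𝒻(V_D), i.e., the subspace spanned by η_D together with E again belongs to the family 𝒻(V_D). -/
open Finset

abbrev Vec := ℕ →₀ ZMod 2

/-- The basis vector `e_i`. -/
noncomputable def e (i : ℕ) : Vec := Finsupp.single i 1

/-- For an interval `p = (a,b)` (representing `[a,b]`), the vector `e_I = ∑_{i∈[a,b]} e_i`. -/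
noncomputable def eI (p : ℕ × ℕ) : Vec := ∑ j ∈ Finset.Icc p.1 p.2, e j

/-- The map `ξ_i` on intervals. -/
def tint (i : ℕ) (p : ℕ × ℕ) : ℕ × ℕ :=
  if i ≤ p.1 then (p.1 + 2, p.2 + 2)
  else if p.2 + 2 ≤ i then p
  else (p.1, p.2 + 2)

/-- The map `t_i` on sets of intervals: `t_i(B') = ξ_i(B') ∪ {[i,i]}`. -/
def tmap (i : ℕ) (B : Finset (ℕ × ℕ)) : Finset (ℕ × ℕ) :=
  B.image (tint i) ∪ {(i, i)}

/-- The inductively defined family `S_D`. -/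
inductive IsS : ℕ → Finset (ℕ × ℕ) → Prop
  | empty (D : ℕ) : IsS D ∅
  | one : IsS 1 {(1, 1)}
  | step (D i : ℕ) (B' : Finset (ℕ × ℕ)) (h1 : 1 ≤ i) (h2 : i ≤ D + 2)
      (h : IsS D B') : IsS (D + 2) (tmap i B')

def primEven (D k : ℕ) : Finset (ℕ × ℕ) := (Finset.Icc 1 k).image fun j => (j, D + 1 - j)
def primOddA (D k : ℕ) : Finset (ℕ × ℕ) := (Finset.Icc 1 k).image fun j => (j, D - j)
def primOddB (D k : ℕ) : Finset (ℕ × ℕ) := (Finset.Icc 1 k).image fun j => (j + 1, D + 1 - j)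

/-- The primitive elements of `𝕊_D`. -/
def IsPrim (D : ℕ) (B : Finset (ℕ × ℕ)) : Prop :=
  B = ∅ ∨
  (Even D ∧ ∃ k, 1 ≤ k ∧ k ≤ D / 2 ∧ B = primEven D k) ∨
  (Odd D ∧ ∃ k, Odd k ∧ 1 ≤ k ∧ k ≤ (D - 1) / 2 ∧ (B = primOddA D k ∨ B = primOddB D k))

/-- The inductively defined family `𝕊_D`. -/
inductive IsSS : ℕ → Finset (ℕ × ℕ) → Prop
  | prim (D : ℕ) (B : Finset (ℕ × ℕ)) : IsPrim D B → IsSS D B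
  | one : IsSS 1 {(1, 1)}
  | step (D i : ℕ) (B' : Finset (ℕ × ℕ)) (h1 : 1 ≤ i) (h2 : i ≤ D + 2)
      (h : IsSS D B') : IsSS (D + 2) (tmap i B')

/-- The subspace `𝔼_B` spanned by the `e_I`, `I ∈ B`. -/
noncomputable def EB (B : Finset (ℕ × ℕ)) : Submodule (ZMod 2) Vec :=
  Submodule.span (ZMod 2) (eI '' (B : Set (ℕ × ℕ)))

/-- Two intervals are non-touching. -/
def Nontouch (p q : ℕ × ℕ) : Prop := p.2 + 2 ≤ q.1 ∨ q.2 + 2 ≤ p.1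

/-- `p ≺ q`: `p = [a,b]` is strictly nested inside `q = [a',b']`, i.e. `a' < a ≤ b < b'`. -/
def Nested (p q : ℕ × ℕ) : Prop := q.1 < p.1 ∧ p.1 ≤ p.2 ∧ p.2 < q.2

/-- `η_D = e_1 + e_3 + ⋯ + e_D` (`D` odd). -/
noncomputable def eta (D : ℕ) : Vec := ∑ j ∈ (Finset.Icc 1 D).filter (fun j => j % 2 = 1), e j

noncomputable def Tfun (i k : ℕ) : Vec :=
  if k + 1 < i then e k
  else if k + 1 = i then e k + e (k + 1) + e (k + 2)
  else e (k + 2)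

/-- The linear map `T_i : V_{D-2} → V_D`. -/
noncomputable def Tlin (i : ℕ) : Vec →ₗ[ZMod 2] Vec :=
  Finsupp.linearCombination (ZMod 2) (Tfun i)

/-- The inductively defined family `𝒻(V_D)` of subspaces. -/
inductive IsF : ℕ → Submodule (ZMod 2) Vec → Prop
  | zero (D : ℕ) : IsF D ⊥
  | one : IsF 1 (Submodule.span (ZMod 2) {e 1})
  | step (D i : ℕ) (E' : Submodule (ZMod 2) Vec) (h1 : 1 ≤ i) (h2 : i ≤ D + 2)
      (h : IsF D E') :
      IsF (D + 2) (Submodule.map (Tlin i) E' ⊔ Submodule.span (ZMod 2) {e i})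

/-- The subspace `V_D = ⟨e_1,…,e_D⟩`. -/
noncomputable def VD (D : ℕ) : Submodule (ZMod 2) Vec :=
  Submodule.span (ZMod 2) (e '' Set.Icc 1 D)

/-- The symplectic form with `(e_i,e_j) = 1` iff `|i-j| = 1`. -/
noncomputable def symp (x y : Vec) : ZMod 2 :=
  x.sum fun i xi => xi * (y (i + 1) + if 1 ≤ i then y (i - 1) else 0)

/-!
Induct on `B ∈ S_D`. The cardinality condition forces the base case to be `D = 1`, `B = ∅`,
where `𝔽η_1 = 𝔽e_1 ∈ 𝒻(V_1)`. In the step `B = t_i(B')` one has `𝔼_B = T_i(𝔼_{B'}) ⊕ 𝔽e_i` and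
`η_{D+2} = T_i(η_D) + e_i`, hence `𝔽η_{D+2} ⊕ 𝔼_B = T_i(𝔽η_D ⊕ 𝔼_{B'}) ⊕ 𝔽e_i`. Non-membership of
`η` propagates because `T_i` has a left inverse, deleting the coordinates `i` and `i + 1`, which
kills `e_i`.
-/

lemma Submodule.span_singleton_add_sup {R M : Type*} [Ring R] [AddCommGroup M] [Module R M]
    {W : Submodule R M} {w : M} (hw : w ∈ W) (v : M) :
    Submodule.span R {v + w} ⊔ W = Submodule.span R {v} ⊔ W := by
  have key : ∀ u u' : M, u' - u ∈ W → Submodule.span R {u} ⊔ W ≤ Submodule.span R {u'} ⊔ W :=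
    fun u u' h => sup_le ((Submodule.span_singleton_le_iff_mem _ _).mpr
      (by simpa using Submodule.sub_mem _ (Submodule.mem_sup_left
        (Submodule.mem_span_singleton_self u')) (Submodule.mem_sup_right h))) le_sup_right
  exact le_antisymm (key _ _ (by simpa using W.neg_mem hw)) (key _ _ (by simpa using hw))

lemma e_apply (i m : ℕ) : e i m = if i = m then 1 else 0 := Finsupp.single_apply

lemma Tlin_apply (i : ℕ) (v : Vec) (m : ℕ) :
    Tlin i v m = (if m + 1 ≤ i then v m else 0) + (if m = i ∧ 1 ≤ m then v (m - 1) else 0)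
      + (if i + 1 ≤ m ∧ 2 ≤ m then v (m - 2) else 0) := by
  induction v using Finsupp.induction_linear with
  | zero => simp
  | add f g hf hg =>
    simp only [map_add, Finsupp.add_apply, hf, hg]
    split_ifs <;> abel
  | single a b =>
    rw [Tlin, Finsupp.linearCombination_single, Finsupp.smul_apply]
    unfold Tfun
    split_ifs <;> simp only [e, Finsupp.add_apply, Finsupp.single_apply] <;> split_ifs <;>
      first | omega | simp

lemma eI_apply (p : ℕ × ℕ) (m : ℕ) : eI p m = if p.1 ≤ m ∧ m ≤ p.2 then 1 else 0 := by
  simp [eI, e, Finsupp.finsetSum_apply, Finsupp.single_apply]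

lemma eta_apply (D m : ℕ) : eta D m = if 1 ≤ m ∧ m ≤ D ∧ m % 2 = 1 then 1 else 0 := by
  simp [eta, e, Finsupp.finsetSum_apply, Finsupp.single_apply, and_assoc]

lemma Tlin_eI (i : ℕ) (p : ℕ × ℕ) : Tlin i (eI p) = eI (tint i p) := by
  ext m
  simp only [Tlin_apply, eI_apply, tint]
  split_ifs <;> first | rfl | omega

lemma eta_add_two {D i : ℕ} (hD : Odd D) (h1 : 1 ≤ i) (h2 : i ≤ D + 2) :
    eta (D + 2) = Tlin i (eta D) + e i := by
  rw [Nat.odd_iff] at hD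
  ext m
  simp only [Finsupp.add_apply, Tlin_apply, eta_apply, e_apply]
  split_ifs <;> first | rfl | omega

lemma EB_tmap (i : ℕ) (B : Finset (ℕ × ℕ)) :
    EB (tmap i B) = (EB B).map (Tlin i) ⊔ Submodule.span (ZMod 2) {e i} := by
  have hdiag : eI (i, i) = e i := by simp [eI]
  rw [EB, tmap, coe_union, Set.image_union, Submodule.span_union, coe_image, Set.image_image,
    coe_singleton, Set.image_singleton, hdiag, EB, Submodule.map_span, Set.image_image]
  simp only [Tlin_eI]

def skipPair (i m : ℕ) : ℕ := if m < i then m else m + 2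

lemma skipPair_injective (i : ℕ) : Function.Injective (skipPair i) := by
  intro a b h
  simp only [skipPair] at h
  split_ifs at h <;> omega

noncomputable def Slin (i : ℕ) : Vec →ₗ[ZMod 2] Vec :=
  Finsupp.lcomapDomain (skipPair i) (skipPair_injective i)

lemma Slin_Tlin (i : ℕ) (v : Vec) : Slin i (Tlin i v) = v := by
  ext m
  simp only [Slin, Finsupp.lcomapDomain_apply, Finsupp.comapDomain_apply, skipPair, Tlin_apply]
  split_ifs <;> first | omega | simp

lemma Slin_e_self (i : ℕ) : Slin i (e i) = 0 := by
  ext m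
  simp only [Slin, Finsupp.lcomapDomain_apply, Finsupp.comapDomain_apply, skipPair, e_apply,
    Finsupp.coe_zero, Pi.zero_apply]
  split_ifs <;> first | omega | rfl

lemma Tlin_add_e_notMem {i : ℕ} {v : Vec} {E : Submodule (ZMod 2) Vec} (hv : v ∉ E) :
    Tlin i v + e i ∉ E.map (Tlin i) ⊔ Submodule.span (ZMod 2) {e i} := by
  intro hmem
  obtain ⟨_, ⟨w, hw, rfl⟩, _, hc, hsum⟩ := Submodule.mem_sup.mp hmem
  obtain ⟨c, rfl⟩ := Submodule.mem_span_singleton.mp hc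
  have := congrArg (Slin i) hsum
  simp only [map_add, map_smul, Slin_Tlin, Slin_e_self, smul_zero, add_zero] at this
  exact hv (this ▸ hw)

lemma span_Tlin_add_e_sup (i : ℕ) (v : Vec) (E : Submodule (ZMod 2) Vec) :
    Submodule.span (ZMod 2) {Tlin i v + e i} ⊔ (E.map (Tlin i) ⊔ Submodule.span (ZMod 2) {e i})
      = (Submodule.span (ZMod 2) {v} ⊔ E).map (Tlin i) ⊔ Submodule.span (ZMod 2) {e i} := by
  rw [Submodule.span_singleton_add_sup (Submodule.mem_sup_right
    (Submodule.mem_span_singleton_self _)), Submodule.map_sup, Submodule.map_span,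
    Set.image_singleton, sup_assoc]

lemma IsS.fst_le_snd {D : ℕ} {B : Finset (ℕ × ℕ)} (hB : IsS D B) : ∀ p ∈ B, p.1 ≤ p.2 := by
  induction hB with
  | empty => simp
  | one => simp
  | step D i B' _ _ _ ih =>
    simp only [tmap, mem_union, mem_image, mem_singleton]
    rintro p (⟨q, hq, rfl⟩ | rfl)
    · have := ih q hq
      simp only [tint]
      split_ifs <;> omega
    · exact le_rfl

lemma tint_ne_diag (i : ℕ) (p : ℕ × ℕ) : tint i p ≠ (i, i) := by
  simp only [tint]
  split_ifs <;> simp only [ne_eq, Prod.ext_iff] <;> omega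

lemma tint_injOn (i : ℕ) : Set.InjOn (tint i) {p | p.1 ≤ p.2} := by
  rintro ⟨a, b⟩ (hab : a ≤ b) ⟨c, d⟩ (hcd : c ≤ d) h
  simp only [tint] at h
  split_ifs at h <;> simp only [Prod.ext_iff] at h ⊢ <;> omega

lemma card_tmap {i : ℕ} {B : Finset (ℕ × ℕ)} (hB : ∀ p ∈ B, p.1 ≤ p.2) :
    (tmap i B).card = B.card + 1 := by
  rw [tmap, card_union_of_disjoint, card_singleton,
    card_image_of_injOn ((tint_injOn i).mono fun p hp => hB p hp)]
  simpa using fun p _ => tint_ne_diag i p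

lemma eta_one : eta 1 = e 1 := by
  ext m
  simp only [eta_apply, e_apply]
  split_ifs <;> first | rfl | omega

/-- `D` odd, `B ∈ S_D`, `|B| = (D−1)/2` implies `η_D ∉ 𝔼_B` and
`𝔽η_D ⊕ 𝔼_B ∈ 𝒻(V_D)`. -/
theorem stmt9 (D : ℕ) (hD : Odd D) (B : Finset (ℕ × ℕ)) (hB : IsS D B)
    (h : B.card = (D - 1) / 2) :
    eta D ∉ EB B ∧ IsF D (Submodule.span (ZMod 2) {eta D} ⊔ EB B) := by
  induction hB with
  | empty D =>
    obtain rfl : D = 1 := by rw [Nat.odd_iff] at hD; rw [card_empty] at h; omega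
    have hEB : EB ∅ = ⊥ := by simp [EB]
    refine ⟨?_, ?_⟩
    · simp [hEB, eta_one, e]
    · simpa [hEB, eta_one] using IsF.one
  | one => simp at h
  | step D i B' h1 h2 hB' ih =>
    have hD' : Odd D := by rw [Nat.odd_iff] at hD ⊢; omega
    rw [card_tmap hB'.fst_le_snd] at h
    obtain ⟨hnotMem, hF⟩ := ih hD' (by rw [Nat.odd_iff] at hD'; omega)
    rw [EB_tmap, eta_add_two hD' h1 h2, span_Tlin_add_e_sup]
    exact ⟨Tlin_add_e_notMem hnotMem, IsF.step D i _ h1 h2 hF⟩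
end

section
/- There is a unique symplectic (alternating bilinear) form (,) on V_D over 𝔽_2 with (e_i, e_j) = 1 if |i−j| = 1 and 0 otherwise. For any B ∈ 𝕊_D, the form (,) vanishes identically on 𝔼_B × 𝔼_B. -/
open Finset

/-! The form is `s + sᵀ` with `s x y = ∑ᵢ xᵢ yᵢ₊₁`, alternating because the field has
characteristic `2`. Every `B ∈ 𝕊_D` is laminar: its intervals are pairwise equal, non-touching
or strictly nested, a property of the primitive sets that every `t_i` preserves. For such a pair,
`(e_I, e_{I'})` counts the adjacent pairs in `I × I'` modulo `2`, and there are none or an even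
number of them. -/

theorem LinearMap.eq_on_span₂ {R M N P : Type*} [CommSemiring R] [AddCommMonoid M]
    [AddCommMonoid N] [AddCommMonoid P] [Module R M] [Module R N] [Module R P]
    {f g : M →ₗ[R] N →ₗ[R] P} {s : Set M} {t : Set N}
    (h : ∀ x ∈ s, ∀ y ∈ t, f x y = g x y) :
    ∀ x ∈ Submodule.span R s, ∀ y ∈ Submodule.span R t, f x y = g x y := by
  intro x hx y hy
  have hs : ∀ x ∈ s, f x y = g x y := fun x hx' =>
    LinearMap.eqOn_span' (f := f x) (g := g x) (h x hx') hy
  exact LinearMap.eqOn_span' (f := f.flip y) (g := g.flip y) hs hx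

noncomputable def shiftPairing : Vec →ₗ[ZMod 2] Vec →ₗ[ZMod 2] ZMod 2 :=
  Finsupp.linearCombination (ZMod 2) fun i => Finsupp.lapply (i + 1)

noncomputable def adjForm : Vec →ₗ[ZMod 2] Vec →ₗ[ZMod 2] ZMod 2 :=
  shiftPairing + shiftPairing.flip

theorem shiftPairing_e (i j : ℕ) : shiftPairing (e i) (e j) = if i + 1 = j then 1 else 0 := by
  simp [shiftPairing, e, Finsupp.single_apply, eq_comm]

theorem adjForm_self (x : Vec) : adjForm x x = 0 :=
  CharTwo.add_self_eq_zero (shiftPairing x x)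

theorem adjForm_comm (x y : Vec) : adjForm x y = adjForm y x :=
  add_comm _ _

theorem adjForm_e (i j : ℕ) : adjForm (e i) (e j) = if i + 1 = j ∨ j + 1 = i then 1 else 0 := by
  simp only [adjForm, LinearMap.add_apply, LinearMap.flip_apply, shiftPairing_e]
  split_ifs <;> first | omega | simp

theorem adjForm_eI_eI (p q : ℕ × ℕ) :
    adjForm (eI p) (eI q) =
      ∑ i ∈ Icc p.1 p.2, ∑ j ∈ Icc q.1 q.2, if i + 1 = j ∨ j + 1 = i then 1 else 0 := by
  simp only [eI, map_sum, LinearMap.sum_apply, adjForm_e]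
  exact sum_comm

theorem adjForm_eI_eI_of_add_two_le {p q : ℕ × ℕ} (h : p.2 + 2 ≤ q.1) :
    adjForm (eI p) (eI q) = 0 := by
  rw [adjForm_eI_eI]
  refine sum_eq_zero fun i hi => sum_eq_zero fun j hj => if_neg ?_
  simp only [mem_Icc] at hi hj
  omega

/-- Every point of `p` has both of its neighbours in `q`, so each row of the double sum
contributes `2 = 0`. -/
theorem adjForm_eI_eI_of_nested {p q : ℕ × ℕ} (h : Nested p q) : adjForm (eI p) (eI q) = 0 := by
  obtain ⟨h₁, -, h₃⟩ := h
  rw [adjForm_eI_eI]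
  refine sum_eq_zero fun i hi => ?_
  simp only [mem_Icc] at hi
  have hnbrs : (Icc q.1 q.2).filter (fun j => i + 1 = j ∨ j + 1 = i) = {i - 1, i + 1} := by
    ext j
    simp only [mem_filter, mem_Icc, mem_insert, mem_singleton]
    omega
  rw [sum_boole, hnbrs, card_pair (by omega)]
  rfl

def IntervalCompatible (p q : ℕ × ℕ) : Prop :=
  p = q ∨ Nontouch p q ∨ Nested p q ∨ Nested q p

theorem IntervalCompatible.symm {p q : ℕ × ℕ} (h : IntervalCompatible p q) :
    IntervalCompatible q p := by
  unfold IntervalCompatible Nontouch at *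
  tauto

theorem adjForm_eI_eI_of_compatible {p q : ℕ × ℕ} (h : IntervalCompatible p q) :
    adjForm (eI p) (eI q) = 0 := by
  rcases h with rfl | h | h | h
  · exact adjForm_self _
  · rcases h with h | h
    · exact adjForm_eI_eI_of_add_two_le h
    · rw [adjForm_comm]
      exact adjForm_eI_eI_of_add_two_le h
  · exact adjForm_eI_eI_of_nested h
  · rw [adjForm_comm]
    exact adjForm_eI_eI_of_nested h

def IsLaminar (B : Finset (ℕ × ℕ)) : Prop :=
  (∀ p ∈ B, p.1 ≤ p.2) ∧ ∀ p ∈ B, ∀ q ∈ B, IntervalCompatible p q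

theorem adjForm_eq_zero_of_isLaminar {B : Finset (ℕ × ℕ)} (hB : IsLaminar B) :
    ∀ x ∈ EB B, ∀ y ∈ EB B, adjForm x y = 0 :=
  LinearMap.eq_on_span₂ (g := 0) <| by
    rintro _ ⟨p, hp, rfl⟩ _ ⟨q, hq, rfl⟩
    exact adjForm_eI_eI_of_compatible (hB.2 p hp q hq)

theorem tint_fst (i : ℕ) (p : ℕ × ℕ) : (tint i p).1 = if i ≤ p.1 then p.1 + 2 else p.1 := by
  unfold tint
  split_ifs <;> rfl

theorem tint_snd (i : ℕ) {p : ℕ × ℕ} (hp : p.1 ≤ p.2) :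
    (tint i p).2 = if i ≤ p.2 + 1 then p.2 + 2 else p.2 := by
  unfold tint
  split_ifs <;> first | rfl | omega

theorem tint_fst_le_snd (i : ℕ) {p : ℕ × ℕ} (hp : p.1 ≤ p.2) : (tint i p).1 ≤ (tint i p).2 := by
  rw [tint_fst, tint_snd i hp]
  split_ifs <;> omega

theorem IntervalCompatible.tint (i : ℕ) {p q : ℕ × ℕ} (hp : p.1 ≤ p.2) (hq : q.1 ≤ q.2)
    (h : IntervalCompatible p q) : IntervalCompatible (tint i p) (tint i q) := by
  rcases h with rfl | h
  · exact Or.inl rfl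
  · right
    simp only [Nontouch, Nested] at h ⊢
    rw [tint_fst i p, tint_snd i hp, tint_fst i q, tint_snd i hq]
    split_ifs <;> omega

theorem intervalCompatible_singleton_tint (i : ℕ) {q : ℕ × ℕ} (hq : q.1 ≤ q.2) :
    IntervalCompatible (i, i) (tint i q) := by
  right
  simp only [Nontouch, Nested]
  rw [tint_fst i q, tint_snd i hq]
  split_ifs <;> omega

theorem IsLaminar.tmap {B : Finset (ℕ × ℕ)} (hB : IsLaminar B) (i : ℕ) :
    IsLaminar (tmap i B) := by
  have hmem : ∀ p ∈ _root_.tmap i B, p = (i, i) ∨ ∃ p' ∈ B, p = tint i p' := by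
    intro p hp
    simp only [_root_.tmap, mem_union, mem_image, mem_singleton] at hp
    rcases hp with ⟨p', hp', rfl⟩ | rfl
    · exact Or.inr ⟨p', hp', rfl⟩
    · exact Or.inl rfl
  constructor
  · intro p hp
    rcases hmem p hp with rfl | ⟨p', hp', rfl⟩
    · exact le_rfl
    · exact tint_fst_le_snd i (hB.1 p' hp')
  · intro p hp q hq
    rcases hmem p hp with rfl | ⟨p', hp', rfl⟩ <;> rcases hmem q hq with rfl | ⟨q', hq', rfl⟩
    · exact Or.inl rfl
    · exact intervalCompatible_singleton_tint i (hB.1 q' hq')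
    · exact (intervalCompatible_singleton_tint i (hB.1 p' hp')).symm
    · exact (hB.2 p' hp' q' hq').tint i (hB.1 p' hp') (hB.1 q' hq')

theorem isLaminar_image_of_nested {s : Finset ℕ} {f : ℕ → ℕ × ℕ}
    (hf : ∀ j ∈ s, (f j).1 ≤ (f j).2) (hnested : ∀ j ∈ s, ∀ j' ∈ s, j < j' → Nested (f j') (f j)) :
    IsLaminar (s.image f) := by
  refine ⟨by simpa using hf, ?_⟩
  simp only [mem_image]
  rintro _ ⟨j, hj, rfl⟩ _ ⟨j', hj', rfl⟩
  rcases lt_trichotomy j j' with hlt | rfl | hgt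
  · exact Or.inr (Or.inr (Or.inr (hnested j hj j' hj' hlt)))
  · exact Or.inl rfl
  · exact Or.inr (Or.inr (Or.inl (hnested j' hj' j hj hgt)))

theorem isLaminar_of_isPrim {D : ℕ} {B : Finset (ℕ × ℕ)} (hB : IsPrim D B) : IsLaminar B := by
  rcases hB with rfl | ⟨-, k, -, hk, rfl⟩ | ⟨-, k, -, -, hk, rfl | rfl⟩
  · simp [IsLaminar]
  all_goals
    refine isLaminar_image_of_nested ?_ ?_ <;> simp only [mem_Icc, Nested] <;> intros <;> omega

theorem isLaminar_of_isSS {D : ℕ} {B : Finset (ℕ × ℕ)} (hB : IsSS D B) : IsLaminar B := by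
  induction hB with
  | prim D B hB => exact isLaminar_of_isPrim hB
  | one => simp [IsLaminar, IntervalCompatible]
  | step D i B' _ _ _ ih => exact ih.tmap i

/-- there is a unique alternating bilinear form on `V_D` with
`(e_i,e_j) = 1` iff `|i−j| = 1`, and it vanishes identically on `𝔼_B × 𝔼_B` for any
`B ∈ 𝕊_D`. -/
theorem stmt13 (D : ℕ) :
    ∃ f : Vec →ₗ[ZMod 2] Vec →ₗ[ZMod 2] ZMod 2,
      (∀ x, f x x = 0) ∧
      (∀ i j, 1 ≤ i → i ≤ D → 1 ≤ j → j ≤ D →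
        f (e i) (e j) = if i + 1 = j ∨ j + 1 = i then 1 else 0) ∧
      (∀ g : Vec →ₗ[ZMod 2] Vec →ₗ[ZMod 2] ZMod 2,
        (∀ x, g x x = 0) →
        (∀ i j, 1 ≤ i → i ≤ D → 1 ≤ j → j ≤ D →
          g (e i) (e j) = if i + 1 = j ∨ j + 1 = i then 1 else 0) →
        ∀ x ∈ VD D, ∀ y ∈ VD D, f x y = g x y) ∧
      (∀ B : Finset (ℕ × ℕ), IsSS D B → ∀ x ∈ EB B, ∀ y ∈ EB B, f x y = 0) := by
  refine ⟨adjForm, adjForm_self, fun i j _ _ _ _ => adjForm_e i j, ?_,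
    fun B hB => adjForm_eq_zero_of_isLaminar (isLaminar_of_isSS hB)⟩
  intro g _ hg
  refine LinearMap.eq_on_span₂ ?_
  rintro _ ⟨i, hi, rfl⟩ _ ⟨j, hj, rfl⟩
  rw [adjForm_e, hg i j hi.1 hi.2 hj.1 hj.2]
end
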